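/- For all nonzero integers i and j, the integer 6·(i + j(6i + 1)) + 1 is not prime (its absolute value is not a prime number). -/

import Mathlib

theorem Int.not_prime_natAbs_mul {a b : ℤ} (ha : a.natAbs ≠ 1) (hb : b.natAbs ≠ 1) :
    ¬ (a * b).natAbs.Prime := by
  rw [Int.natAbs_mul, Nat.prime_mul_iff]
  tauto

theorem Int.natAbs_six_mul_add_one_ne_one {i : ℤ} (hi : i ≠ 0) : (6 * i + 1).natAbs ≠ 1 := by
  omega

theorem stmt_9 (i j : ℤ) (hi : i ≠ 0) (hj : j ≠ 0) :
    ¬ Nat.Prime (6 * (i + j * (6 * i + 1)) + 1).natAbs := by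
  have factor : 6 * (i + j * (6 * i + 1)) + 1 = (6 * i + 1) * (6 * j + 1) := by ring
  rw [factor]
  exact Int.not_prime_natAbs_mul (Int.natAbs_six_mul_add_one_ne_one hi)
    (Int.natAbs_six_mul_add_one_ne_one hj)
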